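/- arXiv:2602.00875 — 2 statements merged into one kernel-verified Lean document; each statement's English description precedes it below -/
import Mathlib

section
/- Let d ≥ 1, and let b : R^d → R^d satisfy the linear growth bound |b(x)|^2 ≤ L_b(1+|x|^2) and the dissipativity condition <x, b(x)> ≤ c_1 - c_2 |x|^2 with c_1, c_2, L_b > 0. Let σ : R^d → R^{d×d} have uniformly bounded Hilbert–Schmidt norm ||σ||_∞. Define the kinetic generator applied to V_m(x,y) = 2|x|^2 + 6 m^2 |y|^2 + 4 m <x,y> as A_m V_m(x,y) = -8 m |y|^2 + 12 m <b(x), y> + 4 <b(x), x> + 6 ||σ(x)||^2. Then for every m with 0 < m ≤ min{c_2/(2 L_b), 2/c_2, 1} one has A_m V_m(x,y) ≤ -(c_2/8) V_m(x,y) + C for all (x,y), where C = 4 c_1 + 3 c_2 + 6 ||σ||_∞^2. -/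
open RealInnerProductSpace

theorem stmt2 (d : ℕ) (hd : 1 ≤ d) (c₁ c₂ L_b S : ℝ)
    (hc₁ : 0 < c₁) (hc₂ : 0 < c₂) (hLb : 0 < L_b)
    (b : EuclideanSpace ℝ (Fin d) → EuclideanSpace ℝ (Fin d))
    (σ : EuclideanSpace ℝ (Fin d) → EuclideanSpace ℝ (Fin d × Fin d))
    (hgrowth : ∀ x, ‖b x‖^2 ≤ L_b * (1 + ‖x‖^2))
    (hdiss : ∀ x, ⟪x, b x⟫ ≤ c₁ - c₂ * ‖x‖^2)
    (hσ : ∀ x, ‖σ x‖ ≤ S)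
    (m : ℝ) (hm : 0 < m) (hm' : m ≤ min (c₂/(2*L_b)) (min (2/c₂) 1)) :
    ∀ x y : EuclideanSpace ℝ (Fin d),
      -8*m*‖y‖^2 + 12*m*⟪b x, y⟫ + 4*⟪b x, x⟫ + 6*‖σ x‖^2
        ≤ -(c₂/8) * (2*‖x‖^2 + 6*m^2*‖y‖^2 + 4*m*⟪x, y⟫) + (4*c₁ + 3*c₂ + 6*S^2) := by
  intro x y
  have hm1 : m ≤ c₂ / (2 * L_b) := le_trans hm' (min_le_left _ _)
  have hm2 : m ≤ 2 / c₂ := le_trans hm' (le_trans (min_le_right _ _) (min_le_left _ _))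
  have hmLb : m * L_b ≤ c₂ / 2 := by
    rw [le_div_iff₀ (by positivity)] at hm1; linarith
  have hmc2 : m * c₂ ≤ 2 := by
    rw [le_div_iff₀ hc₂] at hm2; linarith
  have hσ0 : (0:ℝ) ≤ ‖σ x‖ := norm_nonneg _
  have hσ2 : ‖σ x‖^2 ≤ S^2 := by nlinarith [hσ x]
  have hbx : ⟪b x, x⟫ ≤ c₁ - c₂ * ‖x‖^2 := by
    rw [real_inner_comm]; exact hdiss x
  have hby : ⟪b x, y⟫ ≤ ‖b x‖ * ‖y‖ := real_inner_le_norm _ _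
  have hxy : -(‖x‖ * ‖y‖) ≤ ⟪x, y⟫ := by
    have := abs_real_inner_le_norm x y
    have := abs_le.mp this
    linarith [this.1]
  have hb2 : ‖b x‖^2 ≤ L_b * (1 + ‖x‖^2) := hgrowth x
  have h1 : ⟪b x, y⟫ ≤ (‖b x‖^2 + ‖y‖^2) / 2 := by
    nlinarith [sq_nonneg (‖b x‖ - ‖y‖)]
  -- 12m⟪b,y⟫ ≤ 6m‖b‖² + 6m‖y‖² ≤ 6mL_b(1+‖x‖²) + 6m‖y‖² ≤ 3c₂(1+‖x‖²) + 6m‖y‖²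
  have h2 : 12*m*⟪b x, y⟫ ≤ 3*c₂*(1 + ‖x‖^2) + 6*m*‖y‖^2 := by
    have hA : 12*m*⟪b x, y⟫ ≤ 6*m*‖b x‖^2 + 6*m*‖y‖^2 := by nlinarith
    have hB : m * ‖b x‖^2 ≤ (c₂/2) * (1 + ‖x‖^2) := by
      have : m * ‖b x‖^2 ≤ m * (L_b * (1 + ‖x‖^2)) :=
        mul_le_mul_of_nonneg_left hb2 hm.le
      have h' : m * (L_b * (1 + ‖x‖^2)) ≤ (c₂/2) * (1 + ‖x‖^2) := by
        have hpos : (0:ℝ) ≤ 1 + ‖x‖^2 := by positivity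
        nlinarith
      linarith
    linarith
  -- cross term: -(c₂/2)*m*⟪x,y⟫ bounded via AM-GM
  have hxy' : ⟪x, y⟫ ≤ ‖x‖ * ‖y‖ := real_inner_le_norm x y
  have h3 : (c₂/2) * m * ⟪x, y⟫ ≤ (c₂/4) * ‖x‖^2 + (c₂/4) * m^2 * ‖y‖^2 := by
    have hkey : 2 * m * (‖x‖ * ‖y‖) ≤ ‖x‖^2 + m^2 * ‖y‖^2 := by
      nlinarith [sq_nonneg (‖x‖ - m * ‖y‖)]
    have ha : (c₂*m/2) * ⟪x, y⟫ ≤ (c₂*m/2) * (‖x‖ * ‖y‖) :=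
      mul_le_mul_of_nonneg_left hxy' (by positivity)
    have hb : (c₂/4) * (2 * m * (‖x‖ * ‖y‖)) ≤ (c₂/4) * (‖x‖^2 + m^2 * ‖y‖^2) :=
      mul_le_mul_of_nonneg_left hkey (by positivity)
    linarith
  -- -2m‖y‖² ≤ -(3c₂/4)m²‖y‖² + (c₂/4)m²‖y‖² since c₂m ≤ 2 ⇒ (c₂/2)m² ≤ 2m
  have h4 : c₂ * m^2 * ‖y‖^2 ≤ 2 * m * ‖y‖^2 := by
    have := mul_le_mul_of_nonneg_right hmc2 (mul_nonneg hm.le (sq_nonneg ‖y‖))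
    linarith
  have h5 : (0:ℝ) ≤ c₂ * ‖x‖^2 := mul_nonneg hc₂.le (sq_nonneg ‖x‖)
  linarith
end

section
/- Let Z be a nonnegative random variable with E[Z] ≤ C₀·α and E[Z²] ≤ C₀·α² for some constants C₀ ≥ 1 and 0 < α ≤ 1, and let p ≥ 1 be an integer. Then there is a constant C depending only on C₀ and p such that E[Z |ln Z|^p] ≤ C α |ln α|^p + C α (with the convention 0·|ln 0|^p = 0). -/
/-!
Write `Z = α W`. Then `|log Z| ≤ |log α| + |log W|`, and `x ^ p / p! ≤ exp |x|` gives
`|log w| ^ p ≤ p! (w + 1/w)`, i.e. `w |log w| ^ p ≤ p! (1 + w²)`. Together with `Z ≤ α + Z²/α`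
(AM–GM) this bounds `Z |log Z| ^ p` pointwise by `2 ^ p (|log α| ^ p + p!) (α + Z²/α)`, and the
second-moment hypothesis makes the mean of `α + Z²/α` at most `(1 + C₀) α`.
-/

open MeasureTheory
open scoped Nat

namespace Real

lemma abs_log_pow_le_factorial_mul {w : ℝ} (hw : 0 < w) (p : ℕ) :
    |log w| ^ p ≤ p ! * (w + w⁻¹) := by
  have h := pow_div_factorial_le_exp _ (abs_nonneg (log w)) p
  rw [div_le_iff₀ (by positivity)] at h
  calc |log w| ^ p ≤ exp |log w| * p ! := h
    _ ≤ (exp (log w) + exp (-log w)) * p ! := by gcongr; exact exp_abs_le _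
    _ = p ! * (w + w⁻¹) := by rw [exp_neg, exp_log hw]; ring

lemma mul_abs_log_pow_le {w : ℝ} (hw : 0 < w) (p : ℕ) :
    w * |log w| ^ p ≤ p ! * (1 + w ^ 2) := by
  calc w * |log w| ^ p ≤ w * (p ! * (w + w⁻¹)) := by
        gcongr; exact abs_log_pow_le_factorial_mul hw p
    _ = p ! * (1 + w ^ 2) := by field_simp; ring

lemma mul_abs_log_pow_le_of_scale {z α : ℝ} (hz : 0 ≤ z) (hα : 0 < α) (p : ℕ) :
    z * |log z| ^ p ≤ 2 ^ p * (|log α| ^ p + p !) * (α + z ^ 2 / α) := by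
  rcases hz.eq_or_lt with rfl | hz
  · simp only [zero_mul]; positivity
  set w := z / α
  have hw : 0 < w := div_pos hz hα
  have hsplit : |log z| ≤ |log α| + |log w| := by
    have : log z = log α + log w := by rw [log_div hz.ne' hα.ne']; ring
    exact this ▸ abs_add_le _ _
  have hamgm : z ≤ α + z ^ 2 / α := by
    rw [← sub_nonneg]
    have : α + z ^ 2 / α - z = (z - α) ^ 2 / α + z := by field_simp; ring
    rw [this]; positivity
  have hw_term : z * |log w| ^ p ≤ p ! * (α + z ^ 2 / α) := by
    calc z * |log w| ^ p = α * (w * |log w| ^ p) := by simp only [w]; field_simp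
      _ ≤ α * (p ! * (1 + w ^ 2)) := mul_le_mul_of_nonneg_left (mul_abs_log_pow_le hw p) hα.le
      _ = p ! * (α + z ^ 2 / α) := by simp only [w]; field_simp
  calc z * |log z| ^ p ≤ z * (2 ^ p * (|log α| ^ p + |log w| ^ p)) := by
        gcongr
        calc |log z| ^ p ≤ (|log α| + |log w|) ^ p := by gcongr
          _ ≤ 2 ^ (p - 1) * (|log α| ^ p + |log w| ^ p) :=
            add_pow_le (abs_nonneg _) (abs_nonneg _) p
          _ ≤ 2 ^ p * (|log α| ^ p + |log w| ^ p) := by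
            gcongr; norm_num; omega
    _ = 2 ^ p * (|log α| ^ p * z + z * |log w| ^ p) := by ring
    _ ≤ 2 ^ p * (|log α| ^ p * (α + z ^ 2 / α) + p ! * (α + z ^ 2 / α)) := by
        gcongr
    _ = 2 ^ p * (|log α| ^ p + p !) * (α + z ^ 2 / α) := by ring

end Real

open Real

theorem stmt5_general (C₀ : ℝ) (p : ℕ) :
    ∃ C : ℝ, 0 < C ∧
      ∀ (Ω : Type) (_ : MeasurableSpace Ω) (μ : Measure Ω), IsProbabilityMeasure μ →
        ∀ (Z : Ω → ℝ) (α : ℝ), 0 < α → α ≤ 1 →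
          (∀ ω, 0 ≤ Z ω) →
          Integrable Z μ → Integrable (fun ω => (Z ω)^2) μ →
          Integrable (fun ω => Z ω * |Real.log (Z ω)|^p) μ →
          (∫ ω, Z ω ∂μ) ≤ C₀ * α → (∫ ω, (Z ω)^2 ∂μ) ≤ C₀ * α^2 →
          (∫ ω, Z ω * |Real.log (Z ω)|^p ∂μ) ≤ C * α * |Real.log α|^p + C * α := by
  refine ⟨2 ^ p * p ! * (1 + |C₀|), by positivity, ?_⟩
  intro Ω _ μ _ Z α hα _ hZ _ hZ2 hZlog _ hEZ2
  set L := |log α| ^ p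
  have hdom : Integrable (fun ω => α + Z ω ^ 2 / α) μ :=
    (integrable_const α).add (hZ2.div_const α)
  have hmean : ∫ ω, α + Z ω ^ 2 / α ∂μ ≤ (1 + |C₀|) * α := by
    rw [integral_add (integrable_const α) (hZ2.div_const α), integral_const, integral_div,
      probReal_univ, one_smul]
    have : (∫ ω, Z ω ^ 2 ∂μ) / α ≤ |C₀| * α := by
      rw [div_le_iff₀ hα]; nlinarith [le_abs_self C₀]
    linarith
  have hfact : (1 : ℝ) ≤ p ! := by exact_mod_cast p.factorial_pos
  calc ∫ ω, Z ω * |log (Z ω)| ^ p ∂μ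
      ≤ ∫ ω, 2 ^ p * (L + p !) * (α + Z ω ^ 2 / α) ∂μ :=
        integral_mono hZlog (hdom.const_mul _) fun ω => mul_abs_log_pow_le_of_scale (hZ ω) hα p
    _ = 2 ^ p * (L + p !) * ∫ ω, α + Z ω ^ 2 / α ∂μ := integral_const_mul _ _
    _ ≤ 2 ^ p * (L + p !) * ((1 + |C₀|) * α) := by gcongr
    _ ≤ 2 ^ p * p ! * (1 + |C₀|) * α * L + 2 ^ p * p ! * (1 + |C₀|) * α := by
        have hL : L ≤ p ! * L := le_mul_of_one_le_left (by positivity) hfact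
        calc 2 ^ p * (L + p !) * ((1 + |C₀|) * α) = 2 ^ p * (1 + |C₀|) * α * (L + p !) := by ring
          _ ≤ 2 ^ p * (1 + |C₀|) * α * (p ! * L + p !) := by gcongr
          _ = _ := by ring

theorem stmt5 (C₀ : ℝ) (hC₀ : 1 ≤ C₀) (p : ℕ) (hp : 1 ≤ p) :
    ∃ C : ℝ, 0 < C ∧
      ∀ (Ω : Type) (_ : MeasurableSpace Ω) (μ : Measure Ω), IsProbabilityMeasure μ →
        ∀ (Z : Ω → ℝ) (α : ℝ), 0 < α → α ≤ 1 →
          (∀ ω, 0 ≤ Z ω) →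
          Integrable Z μ → Integrable (fun ω => (Z ω)^2) μ →
          Integrable (fun ω => Z ω * |Real.log (Z ω)|^p) μ →
          (∫ ω, Z ω ∂μ) ≤ C₀ * α → (∫ ω, (Z ω)^2 ∂μ) ≤ C₀ * α^2 →
          (∫ ω, Z ω * |Real.log (Z ω)|^p ∂μ) ≤ C * α * |Real.log α|^p + C * α :=
  stmt5_general C₀ p
end
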